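/- arXiv:1508.03679 — 5 statements merged into one kernel-verified Lean document; each statement's English description precedes it below -/
import Mathlib

section
/- The function g^(mid) from [-1,1]^n to [-1,1] is 4-stable: for every t ∈ [-1,1]^n, every α ∈ (0,1], and every α-light distribution D over subsets of [n], E_{R∼D}[min{g^(mid)(t') : t' ⊳_R t}] ≥ g^(mid)(t) − 4α. -/
open Finset

/-- The solid hypercube `[-1,1]^n`. -/
def cube (n : ℕ) : Set (Fin n → ℝ) := {t | ∀ i, t i ∈ Set.Icc (-1 : ℝ) 1}

/-- The solid hypercube `[0,1]^n`. -/
def cube01 (n : ℕ) : Set (Fin n → ℝ) := {t | ∀ i, t i ∈ Set.Icc (0 : ℝ) 1}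

/-- `D` is a probability distribution over subsets of `[n]`. -/
def IsDist {n : ℕ} (D : Finset (Fin n) → ℝ) : Prop :=
  (∀ R, 0 ≤ D R) ∧ ∑ R : Finset (Fin n), D R = 1

/-- `D` is `α`-light: each coordinate is corrupted with (marginal) probability at most `α`. -/
def IsLight {n : ℕ} (D : Finset (Fin n) → ℝ) (α : ℝ) : Prop :=
  ∀ i : Fin n, ∑ R ∈ Finset.univ.filter (fun R => i ∈ R), D R ≤ α

/-- `min { g t' : t' ∈ K, t' ⊳_R t }`, the worst-case corruption of `t` on `R` within `K`. -/
noncomputable def corruptMin {n : ℕ} (K : Set (Fin n → ℝ)) (g : (Fin n → ℝ) → ℝ)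
    (R : Finset (Fin n)) (t : Fin n → ℝ) : ℝ :=
  sInf (g '' {t' ∈ K | ∀ i ∉ R, t' i = t i})

/-- `g : K → ℝ` is `β`-(noise-)stable. -/
def Stable {n : ℕ} (K : Set (Fin n → ℝ)) (g : (Fin n → ℝ) → ℝ) (β : ℝ) : Prop :=
  ∀ t ∈ K, ∀ α : ℝ, α ∈ Set.Ioc (0 : ℝ) 1 →
    ∀ D : Finset (Fin n) → ℝ, IsDist D → IsLight D α →
      g t - α * β ≤ ∑ R : Finset (Fin n), D R * corruptMin K g R t

/-- `g` is `c`-Lipschitz on `K` with respect to the `L^∞` norm. -/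
def LipschitzLinf {n : ℕ} (K : Set (Fin n → ℝ)) (g : (Fin n → ℝ) → ℝ) (c : ℝ) : Prop :=
  ∀ t ∈ K, ∀ t' ∈ K, ∀ d : ℝ, 0 ≤ d → (∀ i, |t i - t' i| ≤ d) → |g t - g t'| ≤ c * d

/-- The `i`-th largest entry of `t` (1-indexed): `t_[i]`. -/
noncomputable def kthLargest {n : ℕ} (t : Fin n → ℝ) (i : ℕ) : ℝ :=
  ((List.ofFn t).insertionSort (· ≥ ·)).getD (i - 1) 0

/-- `g^(mid)`: the average of all entries except the top and bottom quartiles. -/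
noncomputable def gmid {n : ℕ} (t : Fin n → ℝ) : ℝ :=
  ((((3 * n + 3) / 4 - n / 4 : ℕ) : ℝ))⁻¹ *
    ∑ i ∈ Finset.Icc (n / 4 + 1) ((3 * n + 3) / 4), kthLargest t i

/-!
Sorted decreasingly, a vector `t'` that agrees with `t` outside `R` satisfies
`t'_[i] ≥ t_[i + |R|]`: at most `|R|` of the entries that were at least `t_[i + |R|]` can
have moved. Shifting the middle window of indices by `|R|` lowers its sum by at most
`2|R|`, since entries lie in `[-1, 1]`; the window has length at least `n / 2`, so `g^(mid)`
drops by at most `4|R| / n`. Averaging over an `α`-light `D`, whose expected `|R|` is at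
most `α n`, gives the bound `4α`.
-/

theorem List.Pairwise.le_getElem_iff_lt_countP {α : Type*} [LinearOrder α] {l : List α}
    (hl : l.Pairwise (· ≥ ·)) (v : α) {j : ℕ} (hj : j < l.length) :
    v ≤ l[j] ↔ j < l.countP (fun x => v ≤ x) := by
  induction l generalizing j with
  | nil => simp at hj
  | cons x l ih =>
    rw [List.pairwise_cons] at hl
    by_cases hvx : v ≤ x
    · cases j with
      | zero => simp [hvx]
      | succ j => simp [hvx, ih hl.2 (Nat.lt_of_succ_lt_succ hj)]
    · have hlt : ∀ y ∈ l, y < v := fun y hy => (hl.1 y hy).trans_lt (not_le.mp hvx)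
      have hzero : l.countP (fun x => v ≤ x) = 0 :=
        List.countP_eq_zero.mpr fun y hy => by simpa using hlt y hy
      cases j with
      | zero => simp [hvx, hzero]
      | succ j => simpa [List.countP_cons, hvx, hzero] using hlt _ (List.getElem_mem _)

theorem sum_Ico_sub_le_sum_Ico_add {f : ℕ → ℝ} (hf : ∀ j, |f j| ≤ 1) (a b k : ℕ) :
    ∑ i ∈ Ico a b, f i - 2 * k ≤ ∑ i ∈ Ico a b, f (i + k) := by
  rw [sum_Ico_eq_sum_range, sum_Ico_eq_sum_range]
  induction k with
  | zero => simp
  | succ k ih =>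
    have htelescope := sum_range_sub (fun i => f (a + i + k)) (b - a)
    rw [sum_sub_distrib] at htelescope
    have hfirst := abs_le.mp (hf (a + 0 + k))
    have hlast := abs_le.mp (hf (a + (b - a) + k))
    simp only [add_assoc, add_comm 1 k] at htelescope hfirst hlast ih ⊢
    push_cast
    linarith

section kthLargest

variable {n : ℕ}

theorem List.countP_ofFn {α : Type*} (p : α → Prop) [DecidablePred p] (t : Fin n → α) :
    (List.ofFn t).countP (fun x => p x) = #{i | p (t i)} := by
  rw [List.ofFn_eq_map, List.countP_map, card_def, filter_val, val_univ_fin,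
    Multiset.filter_coe, Multiset.coe_card, List.countP_eq_length_filter]
  rfl

theorem le_kthLargest_iff (t : Fin n → ℝ) (v : ℝ) {j : ℕ} (hj₁ : 1 ≤ j) (hj₂ : j ≤ n) :
    v ≤ kthLargest t j ↔ j ≤ #{i | v ≤ t i} := by
  have hj : j - 1 < ((List.ofFn t).insertionSort (· ≥ ·)).length := by simp; omega
  rw [kthLargest, List.getD_eq_getElem _ _ hj,
    (List.pairwise_insertionSort _ _).le_getElem_iff_lt_countP v hj,
    (List.perm_insertionSort _ _).countP_eq, List.countP_ofFn]
  omega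

theorem kthLargest_mem_Icc {t : Fin n → ℝ} (ht : t ∈ cube n) (j : ℕ) :
    kthLargest t j ∈ Set.Icc (-1 : ℝ) 1 := by
  by_cases hj : j - 1 < ((List.ofFn t).insertionSort (· ≥ ·)).length
  · have hmem := List.getElem_mem hj
    rw [(List.perm_insertionSort _ _).mem_iff, List.mem_ofFn] at hmem
    obtain ⟨i, hi⟩ := hmem
    rw [kthLargest, List.getD_eq_getElem _ _ hj, ← hi]
    exact ht i
  · rw [kthLargest, List.getD_eq_default _ _ (not_lt.mp hj)]
    norm_num

theorem kthLargest_add_card_le {t t' : Fin n → ℝ} {R : Finset (Fin n)}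
    (hR : ∀ i ∉ R, t' i = t i) {i : ℕ} (hi₁ : 1 ≤ i) (hi₂ : i + #R ≤ n) :
    kthLargest t (i + #R) ≤ kthLargest t' i := by
  set v := kthLargest t (i + #R)
  have hcount : i + #R ≤ #{j | v ≤ t j} := (le_kthLargest_iff t v (by omega) hi₂).mp le_rfl
  have hsub : univ.filter (v ≤ t ·) \ R ⊆ univ.filter (v ≤ t' ·) := by
    intro j hj
    simp only [mem_sdiff, mem_filter, mem_univ, true_and] at hj ⊢
    rw [hR j hj.2]
    exact hj.1
  rw [le_kthLargest_iff t' v hi₁ (by omega)]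
  calc i ≤ #{j | v ≤ t j} - #R := by omega
    _ ≤ #(univ.filter (v ≤ t ·) \ R) := le_card_sdiff _ _
    _ ≤ _ := card_le_card hsub

theorem sum_kthLargest_sub_le {t t' : Fin n → ℝ} (ht : t ∈ cube n) (ht' : t' ∈ cube n)
    {R : Finset (Fin n)} (hR : ∀ i ∉ R, t' i = t i) {p q : ℕ} (hp : 1 ≤ p) (hq : q ≤ n) :
    ∑ i ∈ Icc p q, kthLargest t i - 2 * #R ≤ ∑ i ∈ Icc p q, kthLargest t' i := by
  -- Past `n` we only know `t'_[i] ≥ -1`, so the sorted entries of `t` are padded by `-1`.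
  set f : ℕ → ℝ := fun j => if j ≤ n then kthLargest t j else -1
  have hf : ∀ j, |f j| ≤ 1 := by
    intro j
    by_cases hj : j ≤ n
    · simpa [f, hj, abs_le] using kthLargest_mem_Icc ht j
    · simp [f, hj]
  have hwindow := sum_Ico_sub_le_sum_Ico_add hf p (q + 1) #R
  rw [Ico_add_one_right_eq_Icc] at hwindow
  calc ∑ i ∈ Icc p q, kthLargest t i - 2 * #R = ∑ i ∈ Icc p q, f i - 2 * #R := by
        congr 1
        exact sum_congr rfl fun i hi => by simp [f, show i ≤ n by grind]
    _ ≤ ∑ i ∈ Icc p q, f (i + #R) := hwindow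
    _ ≤ ∑ i ∈ Icc p q, kthLargest t' i := by
        refine sum_le_sum fun i hi => ?_
        rw [mem_Icc] at hi
        by_cases hiR : i + #R ≤ n
        · simpa [f, hiR] using kthLargest_add_card_le hR (by omega) hiR
        · simpa [f, hiR] using (kthLargest_mem_Icc ht' i).1

theorem gmid_sub_le {t t' : Fin n → ℝ} (ht : t ∈ cube n) (ht' : t' ∈ cube n)
    {R : Finset (Fin n)} (hR : ∀ i ∉ R, t' i = t i) :
    gmid t - 4 * #R / n ≤ gmid t' := by
  set m := (3 * n + 3) / 4 - n / 4
  have hsum := mul_le_mul_of_nonneg_left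
    (sum_kthLargest_sub_le ht ht' hR (p := n / 4 + 1) (q := (3 * n + 3) / 4) (by omega)
      (by omega)) (by positivity : (0 : ℝ) ≤ (m : ℝ)⁻¹)
  have hscale : (m : ℝ)⁻¹ * (2 * #R) ≤ 4 * #R / n := by
    rcases Nat.eq_zero_or_pos n with rfl | hn
    · simp
    have hm : (n : ℝ) ≤ 2 * m := by norm_cast; omega
    have hm₀ : (0 : ℝ) < m := by norm_cast; omega
    rw [inv_mul_eq_div, div_le_div_iff₀ hm₀ (by positivity)]
    nlinarith [(#R).cast_nonneg (α := ℝ)]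
  rw [mul_sub] at hsum
  unfold gmid
  linarith

end kthLargest

theorem le_corruptMin {n : ℕ} {K : Set (Fin n → ℝ)} {g : (Fin n → ℝ) → ℝ} {R : Finset (Fin n)}
    {t : Fin n → ℝ} {c : ℝ} (ht : t ∈ K) (h : ∀ t' ∈ K, (∀ i ∉ R, t' i = t i) → c ≤ g t') :
    c ≤ corruptMin K g R t :=
  le_csInf ⟨g t, t, ⟨ht, fun _ _ => rfl⟩, rfl⟩ fun _ ⟨t', ⟨ht', hR⟩, hg⟩ => hg ▸ h t' ht' hR

theorem IsLight.sum_mul_card_le {n : ℕ} {D : Finset (Fin n) → ℝ} {α : ℝ} (hD : IsLight D α) :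
    ∑ R, D R * #R ≤ n * α := by
  calc ∑ R, D R * #R = ∑ R, ∑ i, if i ∈ R then D R else 0 := by
        simp [sum_ite_mem, mul_comm]
    _ = ∑ i, ∑ R with i ∈ R, D R := by
        rw [sum_comm]
        simp only [sum_filter]
    _ ≤ ∑ _i : Fin n, α := sum_le_sum fun i _ => hD i
    _ = n * α := by simp

theorem stable_of_sub_mul_card_div_le {n : ℕ} {K : Set (Fin n → ℝ)} {g : (Fin n → ℝ) → ℝ}
    {L : ℝ} (hL : 0 ≤ L)
    (h : ∀ t ∈ K, ∀ R, ∀ t' ∈ K, (∀ i ∉ R, t' i = t i) → g t - L * #R / n ≤ g t') :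
    Stable K g L := by
  intro t ht α hα D hD hlight
  have hsize : L / n * ∑ R, D R * #R ≤ α * L :=
    calc L / n * ∑ R, D R * #R ≤ L / n * (n * α) :=
          mul_le_mul_of_nonneg_left hlight.sum_mul_card_le (by positivity)
      _ = α * L * (n / n) := by ring
      _ ≤ α * L := mul_le_of_le_one_right (mul_nonneg hα.1.le hL) (div_self_le_one _)
  calc g t - α * L ≤ g t - L / n * ∑ R, D R * #R := by linarith
    _ = ∑ R, D R * (g t - L * #R / n) := by
        simp only [mul_sub, sum_sub_distrib, ← sum_mul, hD.2, mul_sum]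
        ring_nf
    _ ≤ ∑ R, D R * corruptMin K g R t :=
        sum_le_sum fun R _ => mul_le_mul_of_nonneg_left (le_corruptMin ht (h t ht R)) (hD.1 R)

/-- `g^(mid)` is 4-stable. -/
theorem gmid_stable {n : ℕ} : Stable (cube n) (gmid (n := n)) 4 :=
  stable_of_sub_mul_card_div_le (by norm_num) fun _ ht _ _ ht' hR => gmid_sub_le ht ht' hR
end

section
/- Let g : [-1,1]^n → [-1,1] be β-stable and c-Lipschitz in L∞, let A be an n × m matrix with entries in [-1,1], let α, δ > 0, and let s ≥ 2 ln(2/α)/δ² be an integer. Fix x ∈ Δ_m and let x̃ be the empirical distribution of s i.i.d. samples from x (so x̃ = (1/s)Σ_{i=1}^s e_{k_i} with k_i ∼ x i.i.d.). Then E[g(A x̃)] ≥ g(A x) − αβ − cδ. -/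
open Finset

/-!
Let `t = A x` and let `t̃ = A x̃` for the random empirical distribution `x̃`. Each coordinate
`t̃ i` is an average of `s` i.i.d. samples of a `[-1,1]`-valued variable with mean `t i`, so by
Hoeffding's inequality the random set `R = {i | δ < |t̃ i - t i|}` contains any fixed `i` with
probability at most `2 exp(-sδ²/2) ≤ α`. Stability applied to the law of `R` bounds `g t - αβ`
by the expected worst corruption of `t` on `R`, and the point equal to `t̃` on `R` and to `t`
off `R` is such a corruption that lies within `δ` of `t̃`, so Lipschitz continuity bounds its
value by `g t̃ + cδ`.
-/

open MeasureTheory ProbabilityTheory Matrix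

section Stability

variable {n : ℕ} {K : Set (Fin n → ℝ)} {g : (Fin n → ℝ) → ℝ} {β : ℝ} {t : Fin n → ℝ}

lemma corruptMin_empty (ht : t ∈ K) : corruptMin K g ∅ t = g t := by
  have : {t' ∈ K | ∀ i ∉ (∅ : Finset (Fin n)), t' i = t i} = {t} := by
    ext t'
    simp only [Set.mem_sep_iff, Set.mem_singleton_iff, Finset.notMem_empty, not_false_eq_true,
      forall_const]
    exact ⟨fun h => funext h.2, by rintro rfl; exact ⟨ht, fun _ => rfl⟩⟩
  rw [corruptMin, this, Set.image_singleton, csInf_singleton]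

lemma Stable.nonneg (hg : Stable K g β) (ht : t ∈ K) : 0 ≤ β := by
  classical
  have hdist : IsDist (Pi.single ∅ 1 : Finset (Fin n) → ℝ) :=
    ⟨fun R => by by_cases h : R = ∅ <;> simp [h], by simp⟩
  have hlight : IsLight (Pi.single ∅ 1 : Finset (Fin n) → ℝ) 1 := fun i => by
    rw [Finset.sum_eq_zero fun R hR => Pi.single_eq_of_ne (ne_empty_of_mem (mem_filter.1 hR).2) _]
    exact zero_le_one
  have := hg t ht 1 ⟨one_pos, le_rfl⟩ _ hdist hlight
  simp only [Pi.single_apply, ite_mul, one_mul, zero_mul, sum_ite_eq', mem_univ, if_true,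
    corruptMin_empty ht] at this
  linarith

variable {Ω : Type*} [Fintype Ω]

def setLaw (w : Ω → ℝ) (R : Ω → Finset (Fin n)) (S : Finset (Fin n)) : ℝ :=
  ∑ ω ∈ univ.filter (fun ω => R ω = S), w ω

lemma sum_setLaw_mul (w : Ω → ℝ) (R : Ω → Finset (Fin n)) (f : Finset (Fin n) → ℝ) :
    ∑ S, setLaw w R S * f S = ∑ ω, w ω * f (R ω) := by
  rw [← sum_fiberwise univ R fun ω => w ω * f (R ω)]
  refine sum_congr rfl fun S _ => ?_
  rw [setLaw, sum_mul]
  exact sum_congr rfl fun ω hω => by rw [(mem_filter.1 hω).2]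

lemma sum_setLaw (w : Ω → ℝ) (R : Ω → Finset (Fin n)) : ∑ S, setLaw w R S = ∑ ω, w ω :=
  sum_fiberwise univ R w

lemma sum_filter_mem_setLaw (w : Ω → ℝ) (R : Ω → Finset (Fin n)) (i : Fin n) :
    ∑ S ∈ univ.filter (fun S => i ∈ S), setLaw w R S =
      ∑ ω ∈ univ.filter (fun ω => i ∈ R ω), w ω := by
  simp only [setLaw]
  rw [sum_fiberwise_eq_sum_filter]
  simp

lemma Stable.sub_mul_le_sum_corruptMin (hg : Stable K g β) (ht : t ∈ K) {w : Ω → ℝ}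
    (hw : w ∈ stdSimplex ℝ Ω) (R : Ω → Finset (Fin n)) {α : ℝ} (hα : 0 < α)
    (hR : ∀ i, ∑ ω ∈ univ.filter (fun ω => i ∈ R ω), w ω ≤ α) :
    g t - α * β ≤ ∑ ω, w ω * corruptMin K g (R ω) t := by
  have hdist : IsDist (setLaw w R) :=
    ⟨fun S => sum_nonneg fun ω _ => hw.1 ω, (sum_setLaw w R).trans hw.2⟩
  have hlight : IsLight (setLaw w R) (min α 1) := fun i => by
    rw [sum_filter_mem_setLaw]
    refine le_min (hR i) ?_
    exact (sum_le_sum_of_subset_of_nonneg (filter_subset _ _) fun ω _ _ => hw.1 ω).trans hw.2.le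
  -- stability is only assumed for parameters in `(0, 1]`, and `0 ≤ β` lets us enlarge `min α 1`
  calc g t - α * β ≤ g t - min α 1 * β := by gcongr; exacts [hg.nonneg ht, min_le_left _ _]
    _ ≤ ∑ S, setLaw w R S * corruptMin K g S t :=
      hg t ht _ ⟨lt_min hα one_pos, min_le_right _ _⟩ _ hdist hlight
    _ = ∑ ω, w ω * corruptMin K g (R ω) t := sum_setLaw_mul ..

variable {c δ : ℝ}

lemma corruptMin_cube_le_add (hbdd : BddBelow (g '' cube n)) (hlip : LipschitzLinf (cube n) g c)
    {t t' : Fin n → ℝ} (ht : t ∈ cube n) (ht' : t' ∈ cube n) (hδ : 0 ≤ δ) :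
    corruptMin (cube n) g (univ.filter fun i => δ < |t' i - t i|) t ≤ g t' + c * δ := by
  set R := univ.filter fun i => δ < |t' i - t i|
  have hu : R.piecewise t' t ∈ cube n := fun i => by
    by_cases hi : i ∈ R <;> simp [hi, ht' i, ht i]
  have hclose : ∀ i, |R.piecewise t' t i - t' i| ≤ δ := fun i => by
    by_cases hi : i ∈ R
    · simp [hi, hδ]
    · rw [piecewise_eq_of_notMem _ _ _ hi, abs_sub_comm]
      simpa [R] using hi
  calc corruptMin (cube n) g R t ≤ g (R.piecewise t' t) :=
        csInf_le (hbdd.mono (Set.image_mono fun _ h => h.1))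
          ⟨_, ⟨hu, fun i hi => piecewise_eq_of_notMem _ _ _ hi⟩, rfl⟩
    _ ≤ g t' + c * δ := by linarith [(abs_le.mp (hlip _ hu t' ht' δ hδ hclose)).2]

theorem Stable.sub_le_sum_of_concentration (hg : Stable (cube n) g β)
    (hbdd : BddBelow (g '' cube n)) (hlip : LipschitzLinf (cube n) g c) (ht : t ∈ cube n)
    {T : Ω → Fin n → ℝ} (hT : ∀ ω, T ω ∈ cube n) {w : Ω → ℝ} (hw : w ∈ stdSimplex ℝ Ω)
    {α : ℝ} (hα : 0 < α) (hδ : 0 ≤ δ)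
    (hconc : ∀ i, ∑ ω ∈ univ.filter (fun ω => δ < |T ω i - t i|), w ω ≤ α) :
    g t - α * β - c * δ ≤ ∑ ω, w ω * g (T ω) := by
  have hstab := hg.sub_mul_le_sum_corruptMin ht hw
    (fun ω => univ.filter fun i => δ < |T ω i - t i|) hα fun i => by simpa using hconc i
  have hlip' : ∑ ω, w ω * corruptMin (cube n) g (univ.filter fun i => δ < |T ω i - t i|) t
      ≤ ∑ ω, w ω * (g (T ω) + c * δ) :=
    sum_le_sum fun ω _ => mul_le_mul_of_nonneg_left
      (corruptMin_cube_le_add hbdd hlip ht (hT ω) hδ) (hw.1 ω)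
  simp only [mul_add, sum_add_distrib, ← sum_mul, hw.2, one_mul] at hlip'
  linarith

end Stability

section Hoeffding

variable {ι : Type*} [Fintype ι] [MeasurableSpace ι] [MeasurableSingletonClass ι]

noncomputable def stdSimplex.toMeasure {x : ι → ℝ} (hx : x ∈ stdSimplex ℝ ι) : Measure ι :=
  (PMF.ofFintype (fun j => ENNReal.ofReal (x j)) (by
    rw [← ENNReal.ofReal_sum_of_nonneg fun j _ => hx.1 j, hx.2, ENNReal.ofReal_one])).toMeasure

instance stdSimplex.isProbabilityMeasure_toMeasure {x : ι → ℝ} (hx : x ∈ stdSimplex ℝ ι) :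
    IsProbabilityMeasure (stdSimplex.toMeasure hx) := by
  unfold stdSimplex.toMeasure; infer_instance

lemma stdSimplex.toMeasure_real_singleton {x : ι → ℝ} (hx : x ∈ stdSimplex ℝ ι) (j : ι) :
    (stdSimplex.toMeasure hx).real {j} = x j := by
  rw [measureReal_def, stdSimplex.toMeasure,
    PMF.toMeasure_apply_singleton _ _ (measurableSet_singleton j), PMF.ofFintype_apply,
    ENNReal.toReal_ofReal (hx.1 j)]

lemma stdSimplex.integral_toMeasure {x : ι → ℝ} (hx : x ∈ stdSimplex ℝ ι) (y : ι → ℝ) :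
    ∫ j, y j ∂(stdSimplex.toMeasure hx) = ∑ j, x j * y j := by
  simp [integral_fintype, stdSimplex.toMeasure_real_singleton]

lemma measureReal_pi_setOf {s : ℕ} (μ : Measure ι) [IsProbabilityMeasure μ]
    (P : (Fin s → ι) → Prop) [DecidablePred P] :
    (Measure.pi fun _ => μ).real {k | P k} = ∑ k ∈ univ.filter P, ∏ l, μ.real {k l} := by
  rw [← Finset.coe_filter_univ, ← sum_measureReal_singleton]
  simp [measureReal_def, ENNReal.toReal_prod]

theorem sum_prod_filter_le_exp {s : ℕ} {x y : ι → ℝ} (hx : x ∈ stdSimplex ℝ ι)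
    (hy : ∀ j, y j ∈ Set.Icc (-1 : ℝ) 1) {ε : ℝ} (hε : 0 ≤ ε) :
    ∑ k ∈ univ.filter (fun k : Fin s → ι => ε ≤ ∑ l, (y (k l) - x ⬝ᵥ y)), ∏ l, x (k l)
      ≤ Real.exp (-ε ^ 2 / (2 * s)) := by
  set μ := stdSimplex.toMeasure hx
  have hsubG : HasSubgaussianMGF (fun j => y j - μ[y]) 1 μ := by
    convert hasSubgaussianMGF_of_mem_Icc (μ := μ) (a := -1) (b := 1)
      (by fun_prop) (ae_of_all _ hy)
    norm_num
  have hcoord : ∀ l : Fin s, HasSubgaussianMGF (fun k : Fin s → ι => y (k l) - μ[y]) 1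
      (Measure.pi fun _ => μ) := fun l => by
    refine HasSubgaussianMGF.of_map (X := fun j => y j - μ[y]) (Y := Function.eval l)
      (measurable_pi_apply (X := fun _ : Fin s => ι) l).aemeasurable ?_
    rwa [(measurePreserving_eval (fun _ => μ) l).map_eq]
  have hindep : iIndepFun (fun (l : Fin s) (k : Fin s → ι) => y (k l) - μ[y])
      (Measure.pi fun _ => μ) :=
    iIndepFun_pi (X := fun _ j => y j - μ[y]) fun _ => by fun_prop
  have hoeffding := HasSubgaussianMGF.measure_sum_ge_le_of_iIndepFun hindep (s := univ)
    (fun l _ => hcoord l) hε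
  rw [stdSimplex.integral_toMeasure, ← dotProduct] at hoeffding
  simpa [measureReal_pi_setOf, μ, stdSimplex.toMeasure_real_singleton] using hoeffding

end Hoeffding

section Sampling

variable {ι : Type*} {s : ℕ}

lemma prod_mem_stdSimplex [Fintype ι] {x : ι → ℝ} (hx : x ∈ stdSimplex ℝ ι) :
    (fun k : Fin s → ι => ∏ l, x (k l)) ∈ stdSimplex ℝ (Fin s → ι) :=
  ⟨fun k => prod_nonneg fun l _ => hx.1 (k l), by rw [← Fintype.sum_pow, hx.2, one_pow]⟩

variable [DecidableEq ι]

noncomputable def empirical (k : Fin s → ι) (j : ι) : ℝ := (#{l | k l = j} : ℝ) / s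

lemma empirical_nonneg (k : Fin s → ι) (j : ι) : 0 ≤ empirical k j := by
  unfold empirical; positivity

variable [Fintype ι]

lemma sum_empirical_le_one (k : Fin s → ι) : ∑ j, empirical k j ≤ 1 := by
  have : ∑ j, (#{l | k l = j} : ℝ) = s := by
    rw [← Nat.cast_sum, ← card_eq_sum_card_fiberwise fun l _ => mem_univ (k l), card_univ,
      Fintype.card_fin]
  simp only [empirical, ← sum_div, this]
  exact div_self_le_one _

lemma dotProduct_empirical (y : ι → ℝ) (k : Fin s → ι) :
    y ⬝ᵥ empirical k = (∑ l, y (k l)) / s := by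
  rw [← sum_fiberwise univ k fun l => y (k l), dotProduct, sum_div]
  refine sum_congr rfl fun j _ => ?_
  rw [sum_congr rfl fun l hl => by rw [(mem_filter.1 hl).2], sum_const, nsmul_eq_mul, empirical]
  ring

variable [MeasurableSpace ι] [MeasurableSingletonClass ι]

theorem sum_prod_filter_lt_abs_le {x y : ι → ℝ} (hx : x ∈ stdSimplex ℝ ι)
    (hy : ∀ j, y j ∈ Set.Icc (-1 : ℝ) 1) {δ : ℝ} (hδ : 0 ≤ δ) :
    ∑ k ∈ univ.filter (fun k : Fin s → ι => δ < |y ⬝ᵥ empirical k - y ⬝ᵥ x|), ∏ l, x (k l)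
      ≤ 2 * Real.exp (-(s * δ ^ 2) / 2) := by
  have hw := prod_mem_stdSimplex (s := s) hx
  rcases s.eq_zero_or_pos with rfl | hs
  · calc _ ≤ ∑ k : Fin 0 → ι, ∏ l, x (k l) :=
          sum_le_sum_of_subset_of_nonneg (filter_subset _ _) fun k _ _ => hw.1 k
      _ ≤ 2 * Real.exp (-((0 : ℕ) * δ ^ 2) / 2) := by rw [hw.2]; norm_num
  have hs' : (0 : ℝ) < s := Nat.cast_pos.mpr hs
  set P := univ.filter (fun k : Fin s → ι => s * δ ≤ ∑ l, (y (k l) - x ⬝ᵥ y))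
  set Q := univ.filter (fun k : Fin s → ι => s * δ ≤ ∑ l, ((-y) (k l) - x ⬝ᵥ -y))
  have hsub : univ.filter (fun k : Fin s → ι => δ < |y ⬝ᵥ empirical k - y ⬝ᵥ x|) ⊆ P ∪ Q := by
    intro k hk
    rw [mem_filter, dotProduct_empirical] at hk
    have hsum : ∑ l, (y (k l) - x ⬝ᵥ y) = s * ((∑ l, y (k l)) / s - y ⬝ᵥ x) := by
      rw [sum_sub_distrib, sum_const, card_univ, Fintype.card_fin, nsmul_eq_mul, dotProduct_comm]
      field_simp
    have hsum_neg : ∑ l, ((-y) (k l) - x ⬝ᵥ -y) = -∑ l, (y (k l) - x ⬝ᵥ y) := by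
      simp only [Pi.neg_apply, dotProduct_neg, ← sum_neg_distrib]
      exact sum_congr rfl fun l _ => by ring
    rcases lt_abs.1 hk.2 with h | h
    · refine mem_union_left _ (mem_filter.2 ⟨mem_univ _, ?_⟩)
      rw [hsum]
      exact mul_le_mul_of_nonneg_left h.le hs'.le
    · refine mem_union_right _ (mem_filter.2 ⟨mem_univ _, ?_⟩)
      rw [hsum_neg, hsum, ← mul_neg]
      exact mul_le_mul_of_nonneg_left h.le hs'.le
  have hexp : ∀ z : ι → ℝ, (∀ j, z j ∈ Set.Icc (-1 : ℝ) 1) →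
      ∑ k ∈ univ.filter (fun k : Fin s → ι => s * δ ≤ ∑ l, (z (k l) - x ⬝ᵥ z)), ∏ l, x (k l)
        ≤ Real.exp (-(s * δ ^ 2) / 2) := fun z hz => by
    convert sum_prod_filter_le_exp hx hz (mul_nonneg hs'.le hδ) using 2
    field_simp
  have hneg : ∀ j, (-y) j ∈ Set.Icc (-1 : ℝ) 1 := fun j => ⟨neg_le_neg (hy j).2, neg_le.2 (hy j).1⟩
  calc _ ≤ ∑ k ∈ P ∪ Q, ∏ l, x (k l) :=
        sum_le_sum_of_subset_of_nonneg hsub fun k _ _ => hw.1 k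
    _ ≤ ∑ k ∈ P, ∏ l, x (k l) + ∑ k ∈ Q, ∏ l, x (k l) := by
        rw [← sum_union_inter]
        exact le_add_of_nonneg_right (sum_nonneg fun k _ => hw.1 k)
    _ ≤ 2 * Real.exp (-(s * δ ^ 2) / 2) := by linarith [hexp y hy, hexp (-y) hneg]

end Sampling

lemma two_mul_exp_neg_le {α δ : ℝ} {s : ℕ} (hα : 0 < α) (hδ : 0 < δ)
    (hs : 2 * Real.log (2 / α) / δ ^ 2 ≤ s) : 2 * Real.exp (-(s * δ ^ 2) / 2) ≤ α := by
  have hlog : Real.log (2 / α) ≤ s * δ ^ 2 / 2 := by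
    rw [div_le_iff₀ (by positivity)] at hs
    linarith
  calc 2 * Real.exp (-(s * δ ^ 2) / 2) ≤ 2 * Real.exp (-Real.log (2 / α)) := by
        gcongr; linarith
    _ = α := by rw [Real.exp_neg, Real.exp_log (by positivity), inv_div]; field_simp

lemma mulVec_mem_cube {n : ℕ} {ι : Type*} [Fintype ι] {A : Matrix (Fin n) ι ℝ}
    (hA : ∀ i j, A i j ∈ Set.Icc (-1 : ℝ) 1) {v : ι → ℝ} (hv₀ : ∀ j, 0 ≤ v j)
    (hv₁ : ∑ j, v j ≤ 1) : A *ᵥ v ∈ cube n := fun i => by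
  refine abs_le.1 ?_
  calc |A i ⬝ᵥ v| ≤ ∑ j, |A i j * v j| := abs_sum_le_sum_abs _ _
    _ ≤ ∑ j, v j := sum_le_sum fun j _ => by
        rw [abs_mul, abs_of_nonneg (hv₀ j)]
        exact mul_le_of_le_one_left (hv₀ j) (abs_le.2 (hA i j))
    _ ≤ 1 := hv₁

/-- main sampling theorem. If `g` is `β`-stable and `c`-Lipschitz in `L^∞`,
`A` has entries in `[-1,1]`, and `x̃` is the empirical distribution of `s ≥ 2 ln(2/α)/δ²`
i.i.d. samples from `x ∈ Δ_m`, then `E[g(A x̃)] ≥ g(Ax) − αβ − cδ`. -/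
theorem mixture_sampling {n m : ℕ} (β c α δ : ℝ) (hα : 0 < α) (hδ : 0 < δ)
    (g : (Fin n → ℝ) → ℝ)
    (hrange : ∀ t ∈ cube n, g t ∈ Set.Icc (-1 : ℝ) 1)
    (hstable : Stable (cube n) g β)
    (hlip : LipschitzLinf (cube n) g c)
    (A : Matrix (Fin n) (Fin m) ℝ) (hA : ∀ i j, A i j ∈ Set.Icc (-1 : ℝ) 1)
    (s : ℕ) (hs : 2 * Real.log (2 / α) / δ ^ 2 ≤ s)
    (x : Fin m → ℝ) (hx : x ∈ stdSimplex ℝ (Fin m)) :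
    g (A.mulVec x) - α * β - c * δ ≤
      ∑ k : Fin s → Fin m, (∏ i, x (k i)) *
        g (A.mulVec fun j => ((Finset.univ.filter fun i => k i = j).card : ℝ) / s) := by
  have hbdd : BddBelow (g '' cube n) := ⟨-1, by rintro _ ⟨t, ht, rfl⟩; exact (hrange t ht).1⟩
  refine hstable.sub_le_sum_of_concentration hbdd hlip (mulVec_mem_cube hA hx.1 hx.2.le)
    (T := fun k => A *ᵥ empirical k)
    (fun k => mulVec_mem_cube hA (empirical_nonneg k) (sum_empirical_le_one k))
    (prod_mem_stdSimplex hx) hα hδ.le fun i => ?_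
  exact (sum_prod_filter_lt_abs_le hx (hA i) hδ.le).trans (two_mul_exp_neg_le hα hδ hs)
end

section
/- Fix a weight vector w ∈ Δ_n. The lottery revenue function g^(lot)_w(t) := max_{p ≥ 0} { p · Σ_{i=1}^n w_i · 1[t_i ≥ p] } on [0,1]^n is 1-stable: for every t ∈ [0,1]^n, every α ∈ (0,1], and every α-light distribution D over subsets of [n], E_{R∼D}[min{g^(lot)_w(t') : t' ⊳_R t}] ≥ g^(lot)_w(t) − α. -/
/-!
At a fixed price `p`, corrupting the coordinates in `R` can only remove bidders `i ∈ R` from the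
lottery, and such a bidder contributed `p · wᵢ ≤ tᵢ · wᵢ ≤ wᵢ`. Taking suprema, corruption on `R`
costs at most the weight `Σ_{i ∈ R} wᵢ`, whose expectation under an `α`-light distribution is at
most `α`.
-/

open Finset

/-- The lottery revenue function `g^(lot)_w(t) = max_{p ≥ 0} p · Σᵢ wᵢ · 1[tᵢ ≥ p]`. -/
noncomputable def gLot {n : ℕ} (w : Fin n → ℝ) (t : Fin n → ℝ) : ℝ :=
  sSup {y : ℝ | ∃ p : ℝ, 0 ≤ p ∧ y = p * ∑ i, w i * (if p ≤ t i then 1 else 0)}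

noncomputable def lotRevenue {n : ℕ} (w t : Fin n → ℝ) (p : ℝ) : ℝ :=
  p * ∑ i, w i * (if p ≤ t i then 1 else 0)

section Lottery

variable {n : ℕ} {w t t' : Fin n → ℝ} {p : ℝ}

theorem lotRevenue_le_sum (hw : ∀ i, 0 ≤ w i) (ht : ∀ i, t i ≤ 1) :
    lotRevenue w t p ≤ ∑ i, w i := by
  rw [lotRevenue, Finset.mul_sum]
  refine Finset.sum_le_sum fun i _ => ?_
  split_ifs
  · nlinarith [hw i, ht i]
  · simpa using hw i

theorem bddAbove_lotRevenue (hw : ∀ i, 0 ≤ w i) (ht : ∀ i, t i ≤ 1) :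
    BddAbove {y : ℝ | ∃ p : ℝ, 0 ≤ p ∧ y = lotRevenue w t p} :=
  ⟨∑ i, w i, by rintro y ⟨p, -, rfl⟩; exact lotRevenue_le_sum hw ht⟩

theorem lotRevenue_le_gLot (hw : ∀ i, 0 ≤ w i) (ht : ∀ i, t i ≤ 1) (hp : 0 ≤ p) :
    lotRevenue w t p ≤ gLot w t :=
  le_csSup (bddAbove_lotRevenue hw ht) ⟨p, hp, rfl⟩

theorem gLot_nonneg (hw : ∀ i, 0 ≤ w i) (ht : ∀ i, t i ≤ 1) : 0 ≤ gLot w t := by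
  simpa [lotRevenue] using lotRevenue_le_gLot hw ht le_rfl

theorem lotRevenue_le_add_sum_of_eqOn_compl (hw : ∀ i, 0 ≤ w i) (ht : ∀ i, t i ≤ 1)
    (hp : 0 ≤ p) {R : Finset (Fin n)} (hR : ∀ i ∉ R, t' i = t i) :
    lotRevenue w t p ≤ lotRevenue w t' p + ∑ i ∈ R, w i := by
  rw [lotRevenue, lotRevenue, ← Fintype.sum_ite_mem R w, Finset.mul_sum, Finset.mul_sum,
    ← Finset.sum_add_distrib]
  refine Finset.sum_le_sum fun i _ => ?_
  by_cases hi : i ∈ R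
  · simp only [hi, if_true]
    split_ifs <;> nlinarith [hw i, ht i]
  · simp [hi, hR i hi]

theorem gLot_sub_sum_le_of_eqOn_compl (hw : ∀ i, 0 ≤ w i) (ht : ∀ i, t i ≤ 1)
    (ht' : ∀ i, t' i ≤ 1) {R : Finset (Fin n)} (hR : ∀ i ∉ R, t' i = t i) :
    gLot w t - ∑ i ∈ R, w i ≤ gLot w t' := by
  rw [sub_le_iff_le_add]
  refine Real.sSup_le ?_ (add_nonneg (gLot_nonneg hw ht') (Finset.sum_nonneg fun i _ => hw i))
  rintro y ⟨p, hp, rfl⟩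
  exact (lotRevenue_le_add_sum_of_eqOn_compl hw ht hp hR).trans
    (add_le_add_left (lotRevenue_le_gLot hw ht' hp) _)

end Lottery

theorem IsLight.sum_mul_sum_le {n : ℕ} {D : Finset (Fin n) → ℝ} {α : ℝ} (hD : IsLight D α)
    {w : Fin n → ℝ} (hw : ∀ i, 0 ≤ w i) :
    ∑ R : Finset (Fin n), D R * ∑ i ∈ R, w i ≤ α * ∑ i, w i := by
  calc ∑ R : Finset (Fin n), D R * ∑ i ∈ R, w i
      = ∑ i, (∑ R ∈ Finset.univ.filter (fun R => i ∈ R), D R) * w i := by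
        simp_rw [Finset.mul_sum, Finset.sum_mul]
        exact Finset.sum_comm' (by simp)
    _ ≤ ∑ i, α * w i := Finset.sum_le_sum fun i _ => mul_le_mul_of_nonneg_right (hD i) (hw i)
    _ = α * ∑ i, w i := Finset.mul_sum .. |>.symm

theorem stable_one_of_sub_sum_le_corruptMin {n : ℕ} {K : Set (Fin n → ℝ)}
    {g : (Fin n → ℝ) → ℝ} {w : Fin n → ℝ} (hw : w ∈ stdSimplex ℝ (Fin n))
    (h : ∀ t ∈ K, ∀ R, g t - ∑ i ∈ R, w i ≤ corruptMin K g R t) : Stable K g 1 := by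
  intro t ht α _ D hD hL
  calc g t - α * 1 = g t - α * ∑ i, w i := by rw [hw.2]
    _ ≤ g t - ∑ R, D R * ∑ i ∈ R, w i := sub_le_sub_left (hL.sum_mul_sum_le hw.1) _
    _ = ∑ R, D R * (g t - ∑ i ∈ R, w i) := by
        simp only [mul_sub, Finset.sum_sub_distrib, ← Finset.sum_mul, hD.2, one_mul]
    _ ≤ ∑ R, D R * corruptMin K g R t :=
        Finset.sum_le_sum fun R _ => mul_le_mul_of_nonneg_left (h t ht R) (hD.1 R)

/-- the lottery revenue function is 1-stable on `[0,1]^n`. -/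
theorem gLot_stable {n : ℕ} (w : Fin n → ℝ) (hw : w ∈ stdSimplex ℝ (Fin n)) :
    Stable (cube01 n) (gLot w) 1 :=
  stable_one_of_sub_sum_le_corruptMin hw fun _ ht _ => le_corruptMin ht fun _ ht' hR =>
    gLot_sub_sum_le_of_eqOn_compl hw.1 (fun i => (ht i).2) (fun i => (ht' i).2) hR
end

section
/- Let G be an undirected graph on n vertices with no self-loops, and let A be the n × n matrix with A_{ii} = 1/2, A_{ij} = A_{ji} = −1 when {i,j} is an edge of G, and A_{ij} = −1/(4n) for distinct non-adjacent i, j. If I ⊆ [n] is an independent set of G of size k ≥ 1 and x ∈ Δ_n is its normalized indicator vector (x_i = 1/k for i ∈ I, else 0), then (Ax)_i ≥ 1/(4n) for every i ∈ I and (Ax)_i < 0 for every i ∉ I. -/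
open Finset

theorem Matrix.mulVec_ite_mem {m n R : Type*} [Fintype n] [DecidableEq n] [NonUnitalNonAssocSemiring R]
    (A : Matrix m n R) (I : Finset n) (c : R) (i : m) :
    A.mulVec (fun j => if j ∈ I then c else 0) i = (∑ j ∈ I, A i j) * c := by
  simp only [Matrix.mulVec, dotProduct, mul_ite, mul_zero, Finset.sum_mul]
  rw [Finset.sum_ite_mem, Finset.univ_inter]

namespace SimpleGraph

variable {V : Type*} (G : SimpleGraph V) [DecidableRel G.Adj] [DecidableEq V]

/-- The paper's gadget `A(G)` is `G.indepSetGadget (1 / (4 * n))`. -/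
noncomputable def indepSetGadget (ε : ℝ) : Matrix V V ℝ :=
  Matrix.of fun i j => if i = j then 1 / 2 else if G.Adj i j then -1 else -ε

variable {G} {ε : ℝ} {I : Finset V} {i : V}

theorem sum_indepSetGadget_of_mem (hI : G.IsIndepSet I) (hi : i ∈ I) :
    ∑ j ∈ I, G.indepSetGadget ε i j = 1 / 2 - ((#I : ℝ) - 1) * ε := by
  have off_diag : ∀ j ∈ I.erase i, G.indepSetGadget ε i j = -ε := fun j hj => by
    have hji : j ≠ i := ne_of_mem_erase hj
    simp [indepSetGadget, hji.symm, hI hi (mem_of_mem_erase hj) hji.symm]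
  rw [← add_sum_erase _ _ hi, sum_congr rfl off_diag, sum_const, card_erase_of_mem hi,
    nsmul_eq_mul, Nat.cast_pred (card_pos.mpr ⟨i, hi⟩)]
  simp only [indepSetGadget, Matrix.of_apply, ↓reduceIte]
  ring

theorem sum_indepSetGadget_le_of_notMem (hε : ε ≤ 1) (hi : i ∉ I) :
    ∑ j ∈ I, G.indepSetGadget ε i j ≤ -(#I * ε) := by
  have entry_le : ∀ j ∈ I, G.indepSetGadget ε i j ≤ -ε := fun j hj => by
    have hij : i ≠ j := fun h => hi (h ▸ hj)
    by_cases hadj : G.Adj i j <;> simp [indepSetGadget, hij, hadj, hε]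
  calc ∑ j ∈ I, G.indepSetGadget ε i j ≤ ∑ _j ∈ I, -ε := sum_le_sum entry_le
    _ = -(#I * ε) := by rw [sum_const, nsmul_eq_mul, mul_neg]

end SimpleGraph

/-- for the independent-set gadget matrix `A(G)`, the normalized
indicator vector `x` of an independent set `I` of size `k ≥ 1` satisfies
`(Ax)ᵢ ≥ 1/(4n)` on `I` and `(Ax)ᵢ < 0` off `I`. -/
theorem indep_set_gadget_from_IS {n : ℕ} (G : SimpleGraph (Fin n)) [DecidableRel G.Adj]
    (I : Finset (Fin n)) (hI : ∀ i ∈ I, ∀ j ∈ I, ¬G.Adj i j)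
    (k : ℕ) (hk : 1 ≤ k) (hcard : I.card = k)
    (A : Matrix (Fin n) (Fin n) ℝ)
    (hA : ∀ i j, A i j =
      if i = j then 1 / 2 else if G.Adj i j then -1 else -(1 / (4 * (n : ℝ))))
    (x : Fin n → ℝ) (hx : ∀ i, x i = if i ∈ I then (k : ℝ)⁻¹ else 0) :
    (∀ i ∈ I, 1 / (4 * (n : ℝ)) ≤ A.mulVec x i) ∧ (∀ i ∉ I, A.mulVec x i < 0) := by
  obtain rfl : A = G.indepSetGadget (1 / (4 * n)) := Matrix.ext hA
  obtain rfl : x = fun j => if j ∈ I then (k : ℝ)⁻¹ else 0 := funext hx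
  subst hcard
  have hIndep : G.IsIndepSet I := fun i hi j hj _ => hI i hi j hj
  have hkn : (#I : ℝ) ≤ n := by exact_mod_cast card_le_univ I |>.trans_eq (Fintype.card_fin n)
  have hk : (1 : ℝ) ≤ #I := by exact_mod_cast hk
  have hn : (0 : ℝ) < n := by linarith
  refine ⟨fun i hi => ?_, fun i hi => ?_⟩
  · rw [Matrix.mulVec_ite_mem, G.sum_indepSetGadget_of_mem hIndep hi,
      le_mul_inv_iff₀ (by linarith)]
    field_simp
    linarith
  · have hε : 1 / (4 * (n : ℝ)) ≤ 1 := by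
      rw [div_le_one (by positivity)]
      linarith
    rw [Matrix.mulVec_ite_mem]
    refine mul_neg_of_neg_of_pos ((G.sum_indepSetGadget_le_of_notMem hε hi).trans_lt ?_)
      (by positivity)
    simp only [neg_lt_zero]
    positivity
end

section
/- Let G be an undirected graph on n vertices with no self-loops, and let A be the n × n matrix with A_{ii} = 1/2, A_{ij} = A_{ji} = −1 when {i,j} is an edge of G, and A_{ij} = −1/(4n) for distinct non-adjacent i,j. Then for every x ∈ Δ_n, the set {i ∈ [n] : (Ax)_i ≥ 0} is an independent set of G. -/
/-! For an edge `i ~ j`, all off-diagonal entries are nonpositive, so `(Ax)_j ≤ x_j / 2 - x_i` and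
`(Ax)_i ≤ x_i / 2 - x_j`; if both are nonnegative then `x_i = x_j = 0`. But every off-diagonal entry
is at most `-1/(4n)`, so `x_i = 0` gives `(Ax)_i ≤ -1/(4n) · ∑ x = -1/(4n) < 0`. -/

open Finset

namespace Matrix

variable {ι : Type*} [Fintype ι] {A : Matrix ι ι ℝ} {x : ι → ℝ}

theorem mulVec_apply_le_of_offDiag_nonpos [DecidableEq ι] (hx : ∀ k, 0 ≤ x k) {i j : ι}
    (hij : i ≠ j) (hA : ∀ k, k ≠ i → k ≠ j → A j k ≤ 0) :
    (A *ᵥ x) j ≤ A j i * x i + A j j * x j := by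
  calc (A *ᵥ x) j = ∑ k, A j k * x k := rfl
    _ ≤ ∑ k ∈ {i, j}, A j k * x k := by
      refine sum_le_sum_of_subset_of_nonpos' (subset_univ _) fun k _ hk => ?_
      simp only [mem_insert, mem_singleton, not_or] at hk
      exact mul_nonpos_of_nonpos_of_nonneg (hA k hk.1 hk.2) (hx k)
    _ = A j i * x i + A j j * x j := sum_pair hij

theorem mulVec_apply_le_of_offDiag_le [DecidableEq ι] (hx : ∀ k, 0 ≤ x k) {i : ι} {c : ℝ}
    (hA : ∀ k, k ≠ i → A i k ≤ -c) :
    (A *ᵥ x) i ≤ (A i i + c) * x i - c * ∑ k, x k := by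
  have hterm : ∀ k, A i k * x k ≤ -c * x k + if k = i then (A i i + c) * x i else 0 := by
    intro k
    by_cases hk : k = i
    · subst hk
      rw [if_pos rfl]
      linarith
    · simp only [hk, if_false, add_zero]
      exact mul_le_mul_of_nonneg_right (hA k hk) (hx k)
  calc (A *ᵥ x) i = ∑ k, A i k * x k := rfl
    _ ≤ ∑ k, (-c * x k + if k = i then (A i i + c) * x i else 0) := sum_le_sum fun k _ => hterm k
    _ = (A i i + c) * x i - c * ∑ k, x k := by
      rw [sum_add_distrib, ← mul_sum, sum_ite_eq' univ i]
      simp only [mem_univ, if_true]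
      ring

end Matrix

section IndepSetGadget

open scoped Matrix

variable {n : ℕ} {G : SimpleGraph (Fin n)} [DecidableRel G.Adj] {A : Matrix (Fin n) (Fin n) ℝ}
  {x : Fin n → ℝ}

theorem indepSetGadget_mulVec_le_of_adj
    (hA : ∀ i j, A i j =
      if i = j then 1 / 2 else if G.Adj i j then -1 else -(1 / (4 * (n : ℝ))))
    (hx : ∀ k, 0 ≤ x k) {a b : Fin n} (hab : G.Adj a b) :
    (A *ᵥ x) b ≤ x b / 2 - x a := by
  have hoff : ∀ k, k ≠ a → k ≠ b → A b k ≤ 0 := by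
    intro k _ hkb
    rw [hA, if_neg (Ne.symm hkb)]
    split_ifs
    · norm_num
    · exact neg_nonpos.mpr (by positivity)
  have hba : A b a = -1 := by rw [hA, if_neg hab.ne.symm, if_pos hab.symm]
  have hbb : A b b = 1 / 2 := by rw [hA, if_pos rfl]
  have := Matrix.mulVec_apply_le_of_offDiag_nonpos hx hab.ne hoff
  rw [hba, hbb] at this
  linarith

theorem indepSetGadget_mulVec_neg_of_eq_zero
    (hA : ∀ i j, A i j =
      if i = j then 1 / 2 else if G.Adj i j then -1 else -(1 / (4 * (n : ℝ))))
    (hx : x ∈ stdSimplex ℝ (Fin n)) {i : Fin n} (hxi : x i = 0) :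
    (A *ᵥ x) i < 0 := by
  have hn : (1 : ℝ) ≤ n := by exact_mod_cast i.pos
  have hc : 0 < 1 / (4 * (n : ℝ)) := by positivity
  have hc_le : 1 / (4 * (n : ℝ)) ≤ 1 := div_le_one_of_le₀ (by linarith) (by positivity)
  have hoff : ∀ k, k ≠ i → A i k ≤ -(1 / (4 * (n : ℝ))) := by
    intro k hki
    rw [hA, if_neg (Ne.symm hki)]
    split_ifs <;> linarith
  have := Matrix.mulVec_apply_le_of_offDiag_le hx.1 hoff
  rw [hxi, hx.2] at this
  linarith

end IndepSetGadget

/-- for the independent-set gadget matrix `A(G)` and any `x ∈ Δ_n`,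
the set of coordinates where `Ax` is nonnegative forms an independent set of `G`. -/
theorem indep_set_gadget_to_IS {n : ℕ} (G : SimpleGraph (Fin n)) [DecidableRel G.Adj]
    (A : Matrix (Fin n) (Fin n) ℝ)
    (hA : ∀ i j, A i j =
      if i = j then 1 / 2 else if G.Adj i j then -1 else -(1 / (4 * (n : ℝ))))
    (x : Fin n → ℝ) (hx : x ∈ stdSimplex ℝ (Fin n)) :
    ∀ i j : Fin n, 0 ≤ A.mulVec x i → 0 ≤ A.mulVec x j → ¬G.Adj i j := by
  intro i j hi hj hadj
  have hj_le := indepSetGadget_mulVec_le_of_adj hA hx.1 hadj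
  have hi_le := indepSetGadget_mulVec_le_of_adj hA hx.1 hadj.symm
  have hxi : x i = 0 := by linarith [hx.1 i, hx.1 j]
  exact (indepSetGadget_mulVec_neg_of_eq_zero hA hx hxi).not_ge hi
end
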